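/- Let f ∈ C^n(ℝ) with f^{(k)}(x) ≥ 0 on [1,∞) for k=0,…,n, let (N,v) be the symmetric game v(S)=f(|S|) with f(1)=0, and let (N,E) be cycle-free. Then for any two nonempty connected edge subsets L, L' ⊆ E with |L| = |L'| and d_L ≤ d_{L'} (numbers of cutedges), the Harsanyi dividends of the link game satisfy λ_L(w^v) ≤ λ_{L'}(w^v). In particular, among all trees with the same number of edges, the star has the smallest and the chain the largest dividend. -/

import Mathlib

open scoped Classical

noncomputable section

variable {V : Type*} [Fintype V] [DecidableEq V]

/-- The vertex set of the connected component of `i` in the graph with edge set `L`. -/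
def comp (L : Finset (Sym2 V)) (i : V) : Finset V :=
  Finset.univ.filter fun j =>
    (SimpleGraph.fromEdgeSet (↑L : Set (Sym2 V))).Reachable i j

/-- Nodes covered by the edge set `L` (the node set `N[L]`). -/
def covered (L : Finset (Sym2 V)) : Finset V :=
  Finset.univ.filter fun i => ∃ e ∈ L, i ∈ e

/-- The collection of (vertex sets of) connected components of the edge-induced
subgraph `Γ_L = (N[L], L)`. -/
def comps (L : Finset (Sym2 V)) : Finset (Finset V) :=
  (covered L).image (comp L)

/-- The link game `w^v` associated with the game `v` and an edge set. -/
def linkGame (v : Finset V → ℝ) (L : Finset (Sym2 V)) : ℝ :=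
  ∑ C ∈ comps L, v C

/-- Shapley value of player `e` in the game `w` with player set `E`. -/
def shapley {α : Type*} [DecidableEq α] (E : Finset α) (w : Finset α → ℝ) (e : α) : ℝ :=
  ∑ L ∈ (E.erase e).powerset,
    ((L.card.factorial : ℝ) * ((E.card - L.card - 1).factorial : ℝ) / (E.card.factorial : ℝ)) *
      (w (insert e L) - w L)

/-- Harsanyi dividend of coalition `L` in the game `w`. -/
def dividend {α : Type*} [DecidableEq α] (w : Finset α → ℝ) (L : Finset α) : ℝ :=
  ∑ T ∈ L.powerset, (-1 : ℝ) ^ (L.card - T.card) * w T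

/-- The position value of node `i` in the communication situation `(N, v, E)`. -/
def positionValue (v : Finset V → ℝ) (E : Finset (Sym2 V)) (i : V) : ℝ :=
  (1 / 2) * ∑ e ∈ E.filter (fun e => i ∈ e), shapley E (linkGame v) e

def Superadditive (v : Finset V → ℝ) : Prop :=
  ∀ S T : Finset V, Disjoint S T → v S + v T ≤ v (S ∪ T)

def ConvexGame (v : Finset V → ℝ) : Prop :=
  ∀ S T : Finset V, v S + v T ≤ v (S ∪ T) + v (S ∩ T)

def ZeroNormalized (v : Finset V → ℝ) : Prop :=
  v ∅ = 0 ∧ ∀ i : V, v {i} = 0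

def SymmetricGame (v : Finset V → ℝ) (f : ℕ → ℝ) : Prop :=
  ∀ S : Finset V, v S = f S.card

/-- An edge set without loops. -/
def SimpleEdges (E : Finset (Sym2 V)) : Prop := ∀ e ∈ E, ¬ e.IsDiag

/-- The edge-induced subgraph `Γ_L = (N[L], L)` is connected. -/
def EdgeConnected (L : Finset (Sym2 V)) : Prop :=
  ∀ i ∈ covered L, ∀ j ∈ covered L,
    (SimpleGraph.fromEdgeSet (↑L : Set (Sym2 V))).Reachable i j

/-- Component of `i` in the subgraph of `Γ_L` induced on the vertex set `S`. -/
def compIn (L : Finset (Sym2 V)) (S : Finset V) (i : V) : Finset V :=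
  S.filter fun j =>
    (SimpleGraph.fromEdgeSet
      (↑(L.filter fun e => ∀ x ∈ e, x ∈ S) : Set (Sym2 V))).Reachable i j

/-- Number of connected components of the subgraph of `Γ_L` induced on `S`. -/
def numCompsIn (L : Finset (Sym2 V)) (S : Finset V) : ℕ :=
  (S.image (compIn L S)).card

/-- A cutvertex of `Γ_L`: a vertex whose removal increases the number of components. -/
def IsCutvertex (L : Finset (Sym2 V)) (i : V) : Prop :=
  i ∈ covered L ∧ numCompsIn L (covered L) < numCompsIn L ((covered L).erase i)

/-- The set of cutedges of `L`: edges both of whose endpoints are cutvertices. -/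
def cutedges (L : Finset (Sym2 V)) : Finset (Sym2 V) :=
  L.filter fun e => ∀ x ∈ e, IsCutvertex L x

/-- The attachment game `v_a(S) = 2(|S| - 1)` (and `v_a(∅) = 0`). -/
def va : Finset V → ℝ := fun S => if S = ∅ then 0 else 2 * ((S.card : ℝ) - 1)

/-- The star on `V` with hub `c`: all (non-loop) edges incident to `c`. -/
def starEdges (c : V) : Finset (Sym2 V) :=
  Finset.univ.filter fun e => ¬ e.IsDiag ∧ c ∈ e

/-- The chain (path) on `Fin n`, with edges `{i, i+1}`. -/
def chainEdges (n : ℕ) : Finset (Sym2 (Fin n)) :=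
  Finset.univ.filter fun e => ∃ i j : Fin n, e = s(i, j) ∧ (j : ℕ) = (i : ℕ) + 1

/-- `F(s, r) = ∑_{k=0}^{r} (-1)^k C(r,k) f(s-k)` for `f : ℕ → ℝ`. -/
def Ffun (f : ℕ → ℝ) (s r : ℕ) : ℝ :=
  ∑ k ∈ Finset.range (r + 1), (-1 : ℝ) ^ k * (r.choose k : ℝ) * f (s - k)

/-- `F(s, r) = ∑_{k=0}^{r} (-1)^k C(r,k) f(s-k)` for `f : ℝ → ℝ`. -/
def FfunR (f : ℝ → ℝ) (s r : ℕ) : ℝ :=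
  ∑ k ∈ Finset.range (r + 1), (-1 : ℝ) ^ k * (r.choose k : ℝ) * f ((s : ℝ) - (k : ℝ))


/-! ### Auxiliary lemmas (chunk 1: basic graph facts and the forest formula) -/

open Finset SimpleGraph

section AuxBasic

lemma aux_mem_covered {L : Finset (Sym2 V)} {i : V} : i ∈ covered L ↔ ∃ e ∈ L, i ∈ e := by
  simp [covered]

lemma aux_adj_iff {L : Finset (Sym2 V)} {a b : V} :
    (SimpleGraph.fromEdgeSet (↑L : Set (Sym2 V))).Adj a b ↔ s(a, b) ∈ L ∧ a ≠ b := by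
  rw [SimpleGraph.fromEdgeSet_adj]; simp

lemma aux_graph_mono {K L : Finset (Sym2 V)} (h : K ⊆ L) :
    (SimpleGraph.fromEdgeSet (↑K : Set (Sym2 V))) ≤
      (SimpleGraph.fromEdgeSet (↑L : Set (Sym2 V))) :=
  SimpleGraph.fromEdgeSet_mono (by exact_mod_cast h)

lemma aux_acyclic_anti {G H : SimpleGraph V} (h : G ≤ H) (hH : H.IsAcyclic) : G.IsAcyclic :=
  fun _ p hp => hH (p.mapLe h) (hp.mapLe h)

lemma aux_walk_edge_mem {L : Finset (Sym2 V)} {a b : V}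
    (p : (SimpleGraph.fromEdgeSet (↑L : Set (Sym2 V))).Walk a b) {f : Sym2 V}
    (hf : f ∈ p.edges) : f ∈ L ∧ ¬ f.IsDiag := by
  have h := p.edges_subset_edgeSet hf
  rw [SimpleGraph.edgeSet_fromEdgeSet] at h
  simpa using h

lemma aux_mem_support_of_mem_edges {G : SimpleGraph V} {a b x : V} (p : G.Walk a b)
    {f : Sym2 V} (hf : f ∈ p.edges) (hx : x ∈ f) : x ∈ p.support := by
  revert hf hx
  induction f using Sym2.ind with
  | _ u v =>
    intro hf hx
    rcases Sym2.mem_iff.1 hx with rfl | rfl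
    · exact p.fst_mem_support_of_mem_edges hf
    · exact p.snd_mem_support_of_mem_edges hf

lemma aux_reachable_of_mem_support {G : SimpleGraph V} {a b x : V} (p : G.Walk a b)
    (hx : x ∈ p.support) : G.Reachable a x := ⟨p.takeUntil x hx⟩

lemma aux_reach_insert {M : Finset (Sym2 V)} {a b x y : V}
    (h : (SimpleGraph.fromEdgeSet (↑(insert s(a,b) M) : Set (Sym2 V))).Reachable x y) :
    (SimpleGraph.fromEdgeSet (↑M : Set (Sym2 V))).Reachable x y
      ∨ ((SimpleGraph.fromEdgeSet (↑M : Set (Sym2 V))).Reachable x a ∧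
          (SimpleGraph.fromEdgeSet (↑M : Set (Sym2 V))).Reachable b y)
      ∨ ((SimpleGraph.fromEdgeSet (↑M : Set (Sym2 V))).Reachable x b ∧
          (SimpleGraph.fromEdgeSet (↑M : Set (Sym2 V))).Reachable a y) := by
  obtain ⟨p⟩ := h
  induction p with
  | nil => exact Or.inl (Reachable.refl _)
  | @cons u w z hadj q ih =>
    rw [aux_adj_iff] at hadj
    obtain ⟨hmem, hne⟩ := hadj
    rw [Finset.mem_insert] at hmem
    rcases hmem with heq | hM
    · rw [Sym2.eq_iff] at heq
      rcases heq with ⟨rfl, rfl⟩ | ⟨rfl, rfl⟩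
      · -- u = a, w = b
        rcases ih with h1 | ⟨h2a, h2b⟩ | ⟨h3a, h3b⟩
        · exact Or.inr (Or.inl ⟨Reachable.refl _, h1⟩)
        · exact Or.inl (h2a.symm.trans h2b)
        · exact Or.inl h3b
      · -- u = b, w = a
        rcases ih with h1 | ⟨h2a, h2b⟩ | ⟨h3a, h3b⟩
        · exact Or.inr (Or.inr ⟨Reachable.refl _, h1⟩)
        · exact Or.inl h2b
        · exact Or.inl (h3a.symm.trans h3b)
    · have hxv : (SimpleGraph.fromEdgeSet (↑M : Set (Sym2 V))).Reachable u w :=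
        (aux_adj_iff.2 ⟨hM, hne⟩).reachable
      rcases ih with h1 | ⟨h2a, h2b⟩ | ⟨h3a, h3b⟩
      · exact Or.inl (hxv.trans h1)
      · exact Or.inr (Or.inl ⟨hxv.trans h2a, h2b⟩)
      · exact Or.inr (Or.inr ⟨hxv.trans h3a, h3b⟩)

end AuxBasic
set_option linter.unusedSectionVars false

section AuxForest

open Finset SimpleGraph

lemma aux_forest_card :
    ∀ M : Finset (Sym2 V), (∀ e ∈ M, ¬ e.IsDiag) →
      (SimpleGraph.fromEdgeSet (↑M : Set (Sym2 V))).IsAcyclic →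
      ∀ S : Finset V, (∀ e ∈ M, ∀ x ∈ e, x ∈ S) →
      (S.image fun i => S.filter ((SimpleGraph.fromEdgeSet (↑M : Set (Sym2 V))).Reachable i)).card
        + M.card = S.card := by
  intro M
  induction M using Finset.induction_on with
  | empty =>
    intro _ _ S _
    rw [Finset.card_empty, add_zero]
    have himg : (S.image fun i =>
        S.filter ((SimpleGraph.fromEdgeSet (↑(∅ : Finset (Sym2 V)) : Set (Sym2 V))).Reachable i))
        = S.image fun i => {i} := by
      apply Finset.image_congr
      intro i hi
      ext j
      simp only [Finset.mem_filter, Finset.mem_singleton]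
      rw [show (SimpleGraph.fromEdgeSet (↑(∅ : Finset (Sym2 V)) : Set (Sym2 V))) = ⊥ by
        rw [Finset.coe_empty, SimpleGraph.fromEdgeSet_empty]]
      rw [SimpleGraph.reachable_bot]
      constructor
      · rintro ⟨-, rfl⟩; rfl
      · rintro rfl; exact ⟨hi, rfl⟩
    rw [himg, Finset.card_image_of_injective _ (fun i j h => by
      simpa using congrArg (fun (s : Finset V) => i ∈ s) h)]
  | @insert e M' hnotmem IH =>
    revert hnotmem
    induction e using Sym2.ind with
    | _ a b =>
      intro hne hd hac S hS
      -- basic facts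
      have hd' : ∀ g ∈ M', ¬ g.IsDiag := fun g hg => hd g (Finset.mem_insert_of_mem hg)
      have hle : (SimpleGraph.fromEdgeSet (↑M' : Set (Sym2 V))) ≤
          (SimpleGraph.fromEdgeSet (↑(insert s(a,b) M') : Set (Sym2 V))) :=
        aux_graph_mono (Finset.subset_insert _ _)
      have hac' : (SimpleGraph.fromEdgeSet (↑M' : Set (Sym2 V))).IsAcyclic :=
        aux_acyclic_anti hle hac
      have hS' : ∀ g ∈ M', ∀ x ∈ g, x ∈ S := fun g hg => hS g (Finset.mem_insert_of_mem hg)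
      have hIH := IH hd' hac' S hS'
      have hab : a ≠ b := by
        have := hd s(a,b) (Finset.mem_insert_self _ _)
        simpa [Sym2.mk_isDiag_iff] using this
      have ha : a ∈ S := hS s(a,b) (Finset.mem_insert_self _ _) a (by simp)
      have hb : b ∈ S := hS s(a,b) (Finset.mem_insert_self _ _) b (by simp)
      set Gm := SimpleGraph.fromEdgeSet (↑(insert s(a,b) M') : Set (Sym2 V)) with hGm
      set Gp := SimpleGraph.fromEdgeSet (↑M' : Set (Sym2 V)) with hGp
      have hadjab : Gm.Adj a b := aux_adj_iff.2 ⟨Finset.mem_insert_self _ _, hab⟩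
      -- no reachability a-b in Gp
      have hnr : ¬ Gp.Reachable a b := by
        intro hr
        have hbr := (SimpleGraph.isAcyclic_iff_forall_adj_isBridge.1 hac) hadjab
        rw [SimpleGraph.isBridge_iff] at hbr
        refine hbr (hr.mono (show Gp ≤ Gm \ SimpleGraph.fromEdgeSet {s(a,b)} from ?_))
        intro x y hxy
        rw [hGp, aux_adj_iff] at hxy
        rw [SimpleGraph.sdiff_adj]
        refine ⟨aux_adj_iff.2 ⟨Finset.mem_insert_of_mem hxy.1, hxy.2⟩, ?_⟩
        rw [SimpleGraph.fromEdgeSet_adj]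
        rintro ⟨hmem, -⟩
        rw [Set.mem_singleton_iff] at hmem
        exact hne (hmem ▸ hxy.1)
      -- reachability in Gm vs Gp
      have hRiff : ∀ x y : V, Gm.Reachable x y ↔
          (Gp.Reachable x y ∨ (Gp.Reachable x a ∧ Gp.Reachable b y)
            ∨ (Gp.Reachable x b ∧ Gp.Reachable a y)) := by
        intro x y
        constructor
        · exact aux_reach_insert
        · rintro (h1 | ⟨h2a, h2b⟩ | ⟨h3a, h3b⟩)
          · exact h1.mono hle
          · exact ((h2a.mono hle).trans hadjab.reachable).trans (h2b.mono hle)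
          · exact ((h3a.mono hle).trans hadjab.symm.reachable).trans (h3b.mono hle)
      set c' : V → Finset V := fun i => S.filter (Gp.Reachable i) with hc'
      set cmp : V → Finset V := fun i => S.filter (Gm.Reachable i) with hcmp
      set U : Finset V := c' a ∪ c' b with hU
      set W : Finset (Finset V) :=
        (S.filter (fun i => ¬ Gp.Reachable i a ∧ ¬ Gp.Reachable i b)).image c' with hW
      -- congruence of c' along Gp-reachability
      have hc'congr : ∀ {i j : V}, Gp.Reachable i j → c' i = c' j := by
        intro i j hij
        ext z
        simp only [hc', Finset.mem_filter, and_congr_right_iff]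
        exact fun _ => ⟨fun h => hij.symm.trans h, fun h => hij.trans h⟩
      have hmemc' : ∀ i ∈ S, i ∈ c' i := fun i hi => by
        simp only [hc', Finset.mem_filter]; exact ⟨hi, Reachable.refl _⟩
      -- components merging
      have hcmpU : ∀ i : V, (Gp.Reachable i a ∨ Gp.Reachable i b) → cmp i = U := by
        intro i hi
        ext z
        simp only [hcmp, hU, hc', Finset.mem_filter, Finset.mem_union]
        rcases hi with hia | hib
        · constructor
          · rintro ⟨hz, hr⟩
            rcases (hRiff i z).1 hr with h1 | ⟨h2a, h2b⟩ | ⟨h3a, h3b⟩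
            · exact Or.inl ⟨hz, hia.symm.trans h1⟩
            · exact Or.inr ⟨hz, h2b⟩
            · exact absurd (hia.symm.trans h3a) hnr
          · rintro (⟨hz, hr⟩ | ⟨hz, hr⟩)
            · exact ⟨hz, (hRiff i z).2 (Or.inl (hia.trans hr))⟩
            · exact ⟨hz, (hRiff i z).2 (Or.inr (Or.inl ⟨hia, hr⟩))⟩
        · constructor
          · rintro ⟨hz, hr⟩
            rcases (hRiff i z).1 hr with h1 | ⟨h2a, h2b⟩ | ⟨h3a, h3b⟩
            · exact Or.inr ⟨hz, hib.symm.trans h1⟩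
            · exact absurd (h2a.symm.trans hib) hnr
            · exact Or.inl ⟨hz, h3b⟩
          · rintro (⟨hz, hr⟩ | ⟨hz, hr⟩)
            · exact ⟨hz, (hRiff i z).2 (Or.inr (Or.inr ⟨hib, hr⟩))⟩
            · exact ⟨hz, (hRiff i z).2 (Or.inl (hib.trans hr))⟩
      have hcmpeq : ∀ i : V, ¬ Gp.Reachable i a → ¬ Gp.Reachable i b → cmp i = c' i := by
        intro i hia hib
        ext z
        simp only [hcmp, hc', Finset.mem_filter, and_congr_right_iff]
        intro _
        constructor
        · intro hr
          rcases (hRiff i z).1 hr with h1 | ⟨h2a, h2b⟩ | ⟨h3a, h3b⟩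
          · exact h1
          · exact absurd h2a hia
          · exact absurd h3a hib
        · exact fun h => (hRiff i z).2 (Or.inl h)
      -- image identities
      have himg1 : S.image cmp = insert U W := by
        ext C
        simp only [Finset.mem_image, Finset.mem_insert]
        constructor
        · rintro ⟨i, hi, rfl⟩
          by_cases hia : Gp.Reachable i a
          · exact Or.inl (hcmpU i (Or.inl hia))
          · by_cases hib : Gp.Reachable i b
            · exact Or.inl (hcmpU i (Or.inr hib))
            · refine Or.inr ?_
              rw [hW]
              exact Finset.mem_image.2 ⟨i, Finset.mem_filter.2 ⟨hi, hia, hib⟩,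
                (hcmpeq i hia hib).symm⟩
        · rintro (rfl | hCW)
          · exact ⟨a, ha, hcmpU a (Or.inl (Reachable.refl _))⟩
          · rw [hW] at hCW
            obtain ⟨i, hi, rfl⟩ := Finset.mem_image.1 hCW
            rw [Finset.mem_filter] at hi
            exact ⟨i, hi.1, hcmpeq i hi.2.1 hi.2.2⟩
      have himg2 : S.image c' = insert (c' a) (insert (c' b) W) := by
        ext C
        simp only [Finset.mem_image, Finset.mem_insert]
        constructor
        · rintro ⟨i, hi, rfl⟩
          by_cases hia : Gp.Reachable i a
          · exact Or.inl (hc'congr hia)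
          · by_cases hib : Gp.Reachable i b
            · exact Or.inr (Or.inl (hc'congr hib))
            · refine Or.inr (Or.inr ?_)
              rw [hW]
              exact Finset.mem_image.2 ⟨i, Finset.mem_filter.2 ⟨hi, hia, hib⟩, rfl⟩
        · rintro (rfl | rfl | hCW)
          · exact ⟨a, ha, rfl⟩
          · exact ⟨b, hb, rfl⟩
          · rw [hW] at hCW
            obtain ⟨i, hi, rfl⟩ := Finset.mem_image.1 hCW
            exact ⟨i, (Finset.mem_filter.1 hi).1, rfl⟩
      -- distinctness
      have hUW : U ∉ W := by
        intro hmem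
        rw [hW] at hmem
        obtain ⟨i, hi, hEq⟩ := Finset.mem_image.1 hmem
        rw [Finset.mem_filter] at hi
        have hiU : i ∈ U := hEq ▸ hmemc' i hi.1
        rw [hU, Finset.mem_union, hc'] at hiU
        rcases hiU with h | h
        · exact hi.2.1 (Finset.mem_filter.1 h).2.symm
        · exact hi.2.2 (Finset.mem_filter.1 h).2.symm
      have haW : c' a ∉ insert (c' b) W := by
        rw [Finset.mem_insert]
        rintro (hEq | hmem)
        · have : b ∈ c' a := hEq.symm ▸ hmemc' b hb
          exact hnr (Finset.mem_filter.1 this).2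
        · rw [hW] at hmem
          obtain ⟨i, hi, hEq⟩ := Finset.mem_image.1 hmem
          rw [Finset.mem_filter] at hi
          have : a ∈ c' i := hEq ▸ hmemc' a ha
          exact hi.2.1 (Finset.mem_filter.1 this).2
      have hbW : c' b ∉ W := by
        intro hmem
        rw [hW] at hmem
        obtain ⟨i, hi, hEq⟩ := Finset.mem_image.1 hmem
        rw [Finset.mem_filter] at hi
        have : b ∈ c' i := hEq ▸ hmemc' b hb
        exact hi.2.2 (Finset.mem_filter.1 this).2
      -- count
      have hcard1 : (S.image cmp).card = W.card + 1 := by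
        rw [himg1, Finset.card_insert_of_notMem hUW]
      have hcard2 : (S.image c').card = W.card + 2 := by
        rw [himg2, Finset.card_insert_of_notMem haW,
          Finset.card_insert_of_notMem hbW]
      rw [Finset.card_insert_of_notMem hne]
      have hgoal : (S.image cmp).card + (M'.card + 1) = S.card := by
        rw [hcard1]
        rw [hcard2] at hIH
        omega
      exact hgoal

end AuxForest
section AuxTree

open Finset SimpleGraph

/-- Degree of a vertex in an edge set. -/
def degA (L : Finset (Sym2 V)) (x : V) : ℕ := (L.filter fun e => x ∈ e).card

lemma aux_covered_nonempty {K : Finset (Sym2 V)} (hne : K.Nonempty) :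
    (covered K).Nonempty := by
  obtain ⟨e, he⟩ := hne
  exact ⟨e.out.1, aux_mem_covered.2 ⟨e, he, Sym2.out_fst_mem e⟩⟩

lemma aux_card_covered {K : Finset (Sym2 V)} (hd : ∀ e ∈ K, ¬ e.IsDiag)
    (hac : (SimpleGraph.fromEdgeSet (↑K : Set (Sym2 V))).IsAcyclic)
    (hne : K.Nonempty) (hc : EdgeConnected K) :
    (covered K).card = K.card + 1 := by
  have hcov : ∀ e ∈ K, ∀ x ∈ e, x ∈ covered K := fun e he x hx => aux_mem_covered.2 ⟨e, he, hx⟩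
  have h := aux_forest_card K hd hac (covered K) hcov
  have himg : ((covered K).image fun i =>
      (covered K).filter ((SimpleGraph.fromEdgeSet (↑K : Set (Sym2 V))).Reachable i))
      = {covered K} := by
    have hconst : ∀ i ∈ covered K,
        (covered K).filter ((SimpleGraph.fromEdgeSet (↑K : Set (Sym2 V))).Reachable i)
          = covered K := fun i hi => Finset.filter_true_of_mem (fun j hj => hc i hi j hj)
    obtain ⟨i0, hi0⟩ := aux_covered_nonempty hne
    ext C
    simp only [Finset.mem_image, Finset.mem_singleton]
    constructor
    · rintro ⟨i, hi, rfl⟩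
      exact hconst i hi
    · rintro rfl
      exact ⟨i0, hi0, hconst i0 hi0⟩
  rw [himg] at h
  simp only [Finset.card_singleton] at h
  omega

lemma aux_numCompsIn_eq (L : Finset (Sym2 V)) (hd : ∀ e ∈ L, ¬ e.IsDiag)
    (hac : (SimpleGraph.fromEdgeSet (↑L : Set (Sym2 V))).IsAcyclic) (S : Finset V) :
    numCompsIn L S + (L.filter fun e => ∀ x ∈ e, x ∈ S).card = S.card := by
  have hd' : ∀ e ∈ (L.filter fun e => ∀ x ∈ e, x ∈ S), ¬ e.IsDiag :=
    fun e he => hd e (Finset.mem_filter.1 he).1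
  have hac' := aux_acyclic_anti (aux_graph_mono (Finset.filter_subset (fun e => ∀ x ∈ e, x ∈ S) L)) hac
  have hcov : ∀ e ∈ (L.filter fun e => ∀ x ∈ e, x ∈ S), ∀ x ∈ e, x ∈ S :=
    fun e he => (Finset.mem_filter.1 he).2
  exact aux_forest_card _ hd' hac' S hcov

lemma aux_isCutvertex_iff {L : Finset (Sym2 V)} (hd : ∀ e ∈ L, ¬ e.IsDiag)
    (hac : (SimpleGraph.fromEdgeSet (↑L : Set (Sym2 V))).IsAcyclic)
    (hne : L.Nonempty) (hc : EdgeConnected L) (x : V) :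
    IsCutvertex L x ↔ x ∈ covered L ∧ 2 ≤ degA L x := by
  have hW : (covered L).card = L.card + 1 := aux_card_covered hd hac hne hc
  have h1 := aux_numCompsIn_eq L hd hac (covered L)
  have hfL : (L.filter fun e => ∀ x ∈ e, x ∈ covered L) = L :=
    Finset.filter_true_of_mem (fun e he x hx => aux_mem_covered.2 ⟨e, he, hx⟩)
  rw [hfL, hW] at h1
  have hone : numCompsIn L (covered L) = 1 := by omega
  have key : numCompsIn L ((covered L).erase x) + (L.filter fun e => x ∉ e).card
      = ((covered L).erase x).card := by
    have h2 := aux_numCompsIn_eq L hd hac ((covered L).erase x)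
    have hfil : (L.filter fun e => ∀ z ∈ e, z ∈ (covered L).erase x)
        = L.filter fun e => x ∉ e := by
      apply Finset.filter_congr
      intro e he
      simp only [Finset.mem_erase]
      constructor
      · intro h hxe
        exact (h x hxe).1 rfl
      · intro h z hz
        exact ⟨fun hzx => h (hzx ▸ hz), aux_mem_covered.2 ⟨e, he, hz⟩⟩
    rw [hfil] at h2
    exact h2
  have hdeq : degA L x = (L.filter fun e => x ∈ e).card := rfl
  have hdegle : (L.filter fun e => x ∈ e).card ≤ L.card :=
    Finset.card_le_card (Finset.filter_subset _ _)
  have hcards : (L.filter fun e => x ∉ e).card + (L.filter fun e => x ∈ e).card = L.card := by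
    rw [Finset.filter_not, Finset.card_sdiff_of_subset (Finset.filter_subset _ _)]
    omega
  unfold IsCutvertex
  rw [hone]
  constructor
  · rintro ⟨hx, hlt⟩
    refine ⟨hx, ?_⟩
    rw [Finset.card_erase_of_mem hx, hW] at key
    omega
  · rintro ⟨hx, hdeg⟩
    refine ⟨hx, ?_⟩
    rw [Finset.card_erase_of_mem hx, hW] at key
    omega

lemma aux_deg_pos {L : Finset (Sym2 V)} {e : Sym2 V} {x : V} (he : e ∈ L) (hx : x ∈ e) :
    1 ≤ degA L x :=
  Finset.card_pos.2 ⟨e, Finset.mem_filter.2 ⟨he, hx⟩⟩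

lemma aux_pendant_eq {L : Finset (Sym2 V)} (hd : ∀ e ∈ L, ¬ e.IsDiag)
    (hac : (SimpleGraph.fromEdgeSet (↑L : Set (Sym2 V))).IsAcyclic)
    (hne : L.Nonempty) (hc : EdgeConnected L) :
    L \ cutedges L = L.filter fun e => ∃ x ∈ e, degA L x = 1 := by
  ext e
  simp only [Finset.mem_sdiff, Finset.mem_filter, cutedges]
  constructor
  · rintro ⟨he, hnc⟩
    refine ⟨he, ?_⟩
    push_neg at hnc
    obtain ⟨x, hx, hncut⟩ := hnc he
    rw [aux_isCutvertex_iff hd hac hne hc] at hncut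
    push_neg at hncut
    have h1 := aux_deg_pos he hx
    have h2 := hncut (aux_mem_covered.2 ⟨e, he, hx⟩)
    exact ⟨x, hx, by omega⟩
  · rintro ⟨he, x, hx, hdeg⟩
    refine ⟨he, ?_⟩
    rintro ⟨-, hcut⟩
    have := (aux_isCutvertex_iff hd hac hne hc x).1 (hcut x hx)
    omega

lemma aux_pendant_card {L : Finset (Sym2 V)} (hd : ∀ e ∈ L, ¬ e.IsDiag)
    (hac : (SimpleGraph.fromEdgeSet (↑L : Set (Sym2 V))).IsAcyclic)
    (hne : L.Nonempty) (hc : EdgeConnected L) :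
    (L.filter fun e => ∃ x ∈ e, degA L x = 1).card + (cutedges L).card = L.card := by
  rw [← aux_pendant_eq hd hac hne hc]
  exact Finset.card_sdiff_add_card_eq_card (Finset.filter_subset _ _)

end AuxTree
section AuxPend

open Finset SimpleGraph

lemma aux_sym2_eq {e : Sym2 V} {y z : V} (hy : y ∈ e) (hz : z ∈ e) (hne : y ≠ z) :
    e = s(y, z) := by
  revert hy hz
  induction e using Sym2.ind with
  | _ u v =>
    intro hy hz
    rcases Sym2.mem_iff.1 hy with rfl | rfl <;> rcases Sym2.mem_iff.1 hz with rfl | rfl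
    · exact absurd rfl hne
    · rfl
    · exact Sym2.eq_swap
    · exact absurd rfl hne

lemma aux_other_endpoint {e : Sym2 V} (hd : ¬ e.IsDiag) {z : V} (hz : z ∈ e) :
    ∃ w, e = s(z, w) ∧ z ≠ w := by
  revert hz
  induction e using Sym2.ind with
  | _ u v =>
    intro hz
    have huv : u ≠ v := by simpa [Sym2.mk_isDiag_iff] using hd
    rcases Sym2.mem_iff.1 hz with rfl | rfl
    · exact ⟨v, rfl, huv⟩
    · exact ⟨u, Sym2.eq_swap, huv.symm⟩

lemma aux_deg_two {L : Finset (Sym2 V)} {f g : Sym2 V} {x : V}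
    (hf : f ∈ L) (hg : g ∈ L) (hxf : x ∈ f) (hxg : x ∈ g) (hne : f ≠ g) :
    2 ≤ degA L x := by
  by_contra hlt
  push_neg at hlt
  have h1 : (L.filter fun e => x ∈ e).card ≤ 1 := by
    have : degA L x ≤ 1 := by omega
    exact this
  exact hne (Finset.card_le_one.1 h1 f (Finset.mem_filter.2 ⟨hf, hxf⟩) g
    (Finset.mem_filter.2 ⟨hg, hxg⟩))

lemma aux_two_edges {G : SimpleGraph V} {i j x : V} (p : G.Walk i j) (hp : p.IsPath)
    {f : Sym2 V} (hf : f ∈ p.edges) (hx : x ∈ f) (hxi : x ≠ i) (hxj : x ≠ j) :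
    ∃ f' ∈ p.edges, f' ≠ f ∧ x ∈ f' := by
  induction p with
  | nil => simp at hf
  | @cons u w z hadj q ih =>
    rw [SimpleGraph.Walk.cons_isPath_iff] at hp
    rw [SimpleGraph.Walk.edges_cons, List.mem_cons] at hf
    rcases hf with rfl | hfq
    · have hxw : x = w := by
        rcases Sym2.mem_iff.1 hx with rfl | rfl
        · exact absurd rfl hxi
        · rfl
      subst hxw
      cases q with
      | nil => exact absurd rfl hxj
      | @cons w' z' z'' hadj' q' =>
        refine ⟨s(x, z'), ?_, ?_, by simp⟩
        · rw [SimpleGraph.Walk.edges_cons, SimpleGraph.Walk.edges_cons]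
          exact List.mem_cons_of_mem _ (List.mem_cons_self)
        · intro hEq
          rw [Sym2.eq_iff] at hEq
          rcases hEq with ⟨rfl, -⟩ | ⟨-, hz'⟩
          · exact hxi rfl
          · apply hp.2
            subst hz'
            rw [SimpleGraph.Walk.support_cons]
            exact List.mem_cons_of_mem _ q'.start_mem_support
    · by_cases hxw : x = w
      · subst hxw
        refine ⟨s(u, x), List.mem_cons_self, ?_, by simp⟩
        intro hEq
        apply hp.2
        exact aux_mem_support_of_mem_edges q (hEq ▸ hfq) (by simp)
      · obtain ⟨f', hf', hne', hxf'⟩ := ih hp.1 hfq hxw hxj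
        exact ⟨f', List.mem_cons_of_mem _ hf', hne', hxf'⟩

lemma aux_walk_stays {T K : Finset (Sym2 V)}
    (hcl : ∀ g ∈ T, g ∉ K → ∀ x ∈ g, x ∉ covered K) {x j : V}
    (p : (SimpleGraph.fromEdgeSet (↑T : Set (Sym2 V))).Walk x j)
    (hx : x ∈ covered K) : j ∈ covered K := by
  induction p with
  | nil => exact hx
  | @cons u w z hadj q ih =>
    rw [aux_adj_iff] at hadj
    have hK : s(u, w) ∈ K := by
      by_contra hnK
      exact hcl _ hadj.1 hnK u (by simp) hx
    exact ih (aux_mem_covered.2 ⟨s(u, w), hK, by simp⟩)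

lemma aux_reachable_transfer {T K : Finset (Sym2 V)} {a b : V}
    (p : (SimpleGraph.fromEdgeSet (↑T : Set (Sym2 V))).Walk a b)
    (hK : ∀ f ∈ p.edges, f ∈ K) :
    (SimpleGraph.fromEdgeSet (↑K : Set (Sym2 V))).Reachable a b := by
  refine ⟨p.transfer _ ?_⟩
  intro f hf
  rw [SimpleGraph.edgeSet_fromEdgeSet]
  exact ⟨by exact_mod_cast hK f hf, (aux_walk_edge_mem p hf).2⟩

lemma aux_dir2aux {L K : Finset (Sym2 V)}
    (hacL : (SimpleGraph.fromEdgeSet (↑L : Set (Sym2 V))).IsAcyclic)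
    (hKL : K ⊆ L) (hconn : EdgeConnected K)
    (hadj : ∀ g ∈ L, g ∉ K → ∃ z ∈ g, z ∈ covered K)
    {x y : V} (hxy : x ≠ y) (he : s(x, y) ∈ L) (heK : s(x, y) ∉ K)
    (hx : x ∈ covered K) : degA L y = 1 := by
  by_contra hdeg
  have h1 : 1 ≤ degA L y := aux_deg_pos he (by simp)
  have h2 : 2 ≤ degA L y := by omega
  rw [show (2 : ℕ) = 1 + 1 by rfl] at h2
  obtain ⟨e1, he1, e2, he2, hne12⟩ := Finset.one_lt_card.1 h2
  have hpick : ∃ e', e' ∈ L ∧ y ∈ e' ∧ e' ≠ s(x, y) := by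
    by_cases hcase : e1 = s(x, y)
    · refine ⟨e2, (Finset.mem_filter.1 he2).1, (Finset.mem_filter.1 he2).2, ?_⟩
      rw [← hcase]; exact fun h => hne12 h.symm
    · exact ⟨e1, (Finset.mem_filter.1 he1).1, (Finset.mem_filter.1 he1).2, hcase⟩
  obtain ⟨e', he'L, hy_e', hne'⟩ := hpick
  have hadjxy : (SimpleGraph.fromEdgeSet (↑L : Set (Sym2 V))).Adj x y :=
    aux_adj_iff.2 ⟨he, hxy⟩
  have hbr := (SimpleGraph.isAcyclic_iff_forall_adj_isBridge.1 hacL) hadjxy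
  rw [SimpleGraph.isBridge_iff] at hbr
  apply hbr
  have hKle : (SimpleGraph.fromEdgeSet (↑K : Set (Sym2 V))) ≤
      (SimpleGraph.fromEdgeSet (↑L : Set (Sym2 V)) \ SimpleGraph.fromEdgeSet {s(x, y)}) := by
    intro u v huv
    rw [aux_adj_iff] at huv
    rw [SimpleGraph.sdiff_adj]
    refine ⟨aux_adj_iff.2 ⟨hKL huv.1, huv.2⟩, ?_⟩
    rw [SimpleGraph.fromEdgeSet_adj]
    rintro ⟨hmem, -⟩
    rw [Set.mem_singleton_iff] at hmem
    exact heK (hmem ▸ huv.1)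
  by_cases hyK : y ∈ covered K
  · exact (hconn x hx y hyK).mono hKle
  · have he'K : e' ∉ K := fun h => hyK (aux_mem_covered.2 ⟨e', h, hy_e'⟩)
    obtain ⟨z, hz_e', hzK⟩ := hadj e' he'L he'K
    have hzy : z ≠ y := fun h => hyK (h ▸ hzK)
    have he'eq : e' = s(z, y) := aux_sym2_eq hz_e' hy_e' hzy
    have hrz : (SimpleGraph.fromEdgeSet (↑K : Set (Sym2 V))).Reachable x z := hconn x hx z hzK
    have hadj2 : (SimpleGraph.fromEdgeSet (↑L : Set (Sym2 V)) \
        SimpleGraph.fromEdgeSet {s(x, y)}).Adj z y := by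
      rw [SimpleGraph.sdiff_adj]
      refine ⟨aux_adj_iff.2 ⟨he'eq ▸ he'L, hzy⟩, ?_⟩
      rw [SimpleGraph.fromEdgeSet_adj]
      rintro ⟨hmem, -⟩
      rw [Set.mem_singleton_iff] at hmem
      exact hne' (he'eq.trans hmem)
    exact (hrz.mono hKle).trans hadj2.reachable

lemma aux_dir2 {L K : Finset (Sym2 V)} (hdL : ∀ e ∈ L, ¬ e.IsDiag)
    (hacL : (SimpleGraph.fromEdgeSet (↑L : Set (Sym2 V))).IsAcyclic)
    (hKL : K ⊆ L) (hconn : EdgeConnected K)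
    (hadj : ∀ g ∈ L, g ∉ K → ∃ z ∈ g, z ∈ covered K)
    {e : Sym2 V} (he : e ∈ L) (heK : e ∉ K) : ∃ x ∈ e, degA L x = 1 := by
  obtain ⟨z, hz, hzK⟩ := hadj e he heK
  obtain ⟨w, he_eq, hzw⟩ := aux_other_endpoint (hdL e he) hz
  subst he_eq
  exact ⟨w, by simp, aux_dir2aux hacL hKL hconn hadj hzw he heK hzK⟩

lemma aux_dir1_conn {L D : Finset (Sym2 V)} (hLconn : EdgeConnected L)
    (hDP : ∀ e ∈ D, ∃ x ∈ e, degA L x = 1) (hDL : D ⊆ L) :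
    EdgeConnected (L \ D) := by
  intro i hi j hj
  have hcov : ∀ {x : V}, x ∈ covered (L \ D) → x ∈ covered L := by
    intro x hx
    obtain ⟨g, hg, hxg⟩ := aux_mem_covered.1 hx
    exact aux_mem_covered.2 ⟨g, (Finset.mem_sdiff.1 hg).1, hxg⟩
  obtain ⟨wk⟩ := hLconn i (hcov hi) j (hcov hj)
  obtain ⟨pv, hpp⟩ := wk.toPath
  have hedges : ∀ f ∈ pv.edges, f ∈ L \ D := by
    intro f hf
    have hfL := (aux_walk_edge_mem _ hf).1
    rw [Finset.mem_sdiff]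
    refine ⟨hfL, fun hfD => ?_⟩
    obtain ⟨x, hx, hdeg⟩ := hDP f hfD
    by_cases hxi : x = i
    · subst hxi
      obtain ⟨g, hg, hxg⟩ := aux_mem_covered.1 hi
      have hgf : g ≠ f := fun h => (Finset.mem_sdiff.1 hg).2 (h ▸ hfD)
      have := aux_deg_two (Finset.mem_sdiff.1 hg).1 hfL hxg hx hgf
      omega
    · by_cases hxj : x = j
      · subst hxj
        obtain ⟨g, hg, hxg⟩ := aux_mem_covered.1 hj
        have hgf : g ≠ f := fun h => (Finset.mem_sdiff.1 hg).2 (h ▸ hfD)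
        have := aux_deg_two (Finset.mem_sdiff.1 hg).1 hfL hxg hx hgf
        omega
      · obtain ⟨f', hf', hne', hxf'⟩ := aux_two_edges pv hpp hf hx hxi hxj
        have hf'L := (aux_walk_edge_mem _ hf').1
        have := aux_deg_two hf'L hfL hxf' hx hne'
        omega
  exact aux_reachable_transfer pv hedges

lemma aux_dir1_adj {L D : Finset (Sym2 V)} (hdL : ∀ e ∈ L, ¬ e.IsDiag)
    (hLconn : EdgeConnected L)
    (hDP : ∀ e ∈ D, ∃ x ∈ e, degA L x = 1) (hDL : D ⊆ L)
    (hKne : (L \ D).Nonempty) :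
    ∀ g ∈ L, g ∉ L \ D → ∃ z ∈ g, z ∈ covered (L \ D) := by
  intro e heL heK
  have heD : e ∈ D := by
    by_contra hnD
    exact heK (Finset.mem_sdiff.2 ⟨heL, hnD⟩)
  obtain ⟨x, hx, hdegx⟩ := hDP e heD
  obtain ⟨c, he_eq, hxc⟩ := aux_other_endpoint (hdL e heL) hx
  refine ⟨c, by rw [he_eq]; simp, ?_⟩
  by_contra hcK
  obtain ⟨g0, hg0⟩ := hKne
  have hg0L : g0 ∈ L := (Finset.mem_sdiff.1 hg0).1
  have hg0D : g0 ∉ D := (Finset.mem_sdiff.1 hg0).2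
  obtain ⟨u, huE⟩ : ∃ u, u ∈ g0 := ⟨g0.out.1, Sym2.out_fst_mem g0⟩
  have hu : u ∈ covered (L \ D) := aux_mem_covered.2 ⟨g0, hg0, huE⟩
  have hcu : c ≠ u := fun h => hcK (h ▸ hu)
  have hcL : c ∈ covered L := aux_mem_covered.2 ⟨e, heL, by rw [he_eq]; simp⟩
  have huL : u ∈ covered L := aux_mem_covered.2 ⟨g0, hg0L, huE⟩
  obtain ⟨wk⟩ := hLconn c hcL u huL
  obtain ⟨qv, hqp⟩ := wk.toPath
  by_cases hq : ∃ f ∈ qv.edges, f ∈ D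
  · obtain ⟨f, hfq, hfD⟩ := hq
    obtain ⟨x', hx', hdx'⟩ := hDP f hfD
    have hfL := (aux_walk_edge_mem _ hfq).1
    by_cases hx'c : x' = c
    · -- the only edge at c is both e and f, so e = f
      have hce : c ∈ e := by rw [he_eq]; simp
      have hdc : degA L c = 1 := hx'c ▸ hdx'
      have hcf : c ∈ f := hx'c ▸ hx'
      have hef : e = f := by
        have hle1 : (L.filter fun g => c ∈ g).card ≤ 1 := le_of_eq hdc
        exact Finset.card_le_one.1 hle1 e (Finset.mem_filter.2 ⟨heL, hce⟩) f
          (Finset.mem_filter.2 ⟨hfL, hcf⟩)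
      rw [← hef] at hfq
      -- now x ∈ e is on the path, x ≠ c, so x = u or internal; both contradict deg x = 1
      by_cases hxu : x = u
      · subst hxu
        have hgf : g0 ≠ e := fun h => hg0D (h ▸ heD)
        have := aux_deg_two hg0L heL huE hx hgf
        omega
      · obtain ⟨f', hf', hne', hxf'⟩ := aux_two_edges qv hqp hfq hx hxc hxu
        have hf'L := (aux_walk_edge_mem _ hf').1
        have := aux_deg_two hf'L heL hxf' hx hne'
        omega
    · by_cases hx'u : x' = u
      · subst hx'u
        have hgf : g0 ≠ f := fun h => hg0D (h ▸ hfD)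
        have := aux_deg_two hg0L hfL huE hx' hgf
        omega
      · obtain ⟨f', hf', hne', hxf'⟩ := aux_two_edges qv hqp hfq hx' hx'c hx'u
        have hf'L := (aux_walk_edge_mem _ hf').1
        have := aux_deg_two hf'L hfL hxf' hx' hne'
        omega
  · push_neg at hq
    cases hw : qv with
    | nil => exact hcu rfl
    | @cons _ w _ hadjcw q' =>
      have hf0 : s(c, w) ∈ qv.edges := by
        rw [hw, SimpleGraph.Walk.edges_cons]
        exact List.mem_cons_self
      have hf0L := (aux_walk_edge_mem _ hf0).1
      have hf0D := hq _ hf0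
      exact hcK (aux_mem_covered.2 ⟨s(c, w), Finset.mem_sdiff.2 ⟨hf0L, hf0D⟩, by simp⟩)

end AuxPend
section AuxSum

open Finset SimpleGraph

lemma aux_mem_comp {T : Finset (Sym2 V)} {i j : V} :
    j ∈ comp T i ↔ (SimpleGraph.fromEdgeSet (↑T : Set (Sym2 V))).Reachable i j := by
  simp [comp]

/-- The collection of edge sets of components: nonempty connected "closed" subsets. -/
def ccs (T : Finset (Sym2 V)) : Finset (Finset (Sym2 V)) :=
  T.powerset.filter fun K => K.Nonempty ∧ EdgeConnected K ∧
    ∀ g ∈ T, g ∉ K → ∀ x ∈ g, x ∉ covered K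

lemma aux_comp_edges_mem {T : Finset (Sym2 V)} (hd : ∀ e ∈ T, ¬ e.IsDiag)
    {i : V} (hi : i ∈ covered T) :
    (T.filter fun e => ∀ x ∈ e, x ∈ comp T i) ∈ ccs T ∧
      covered (T.filter fun e => ∀ x ∈ e, x ∈ comp T i) = comp T i := by
  set K := T.filter fun e => ∀ x ∈ e, x ∈ comp T i with hKdef
  have hKT : K ⊆ T := Finset.filter_subset _ _
  have hclose : ∀ e ∈ T, ∀ x ∈ e,
      (SimpleGraph.fromEdgeSet (↑T : Set (Sym2 V))).Reachable i x → e ∈ K := by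
    intro e he x hx hr
    obtain ⟨w, rfl, hxw⟩ := aux_other_endpoint (hd e he) hx
    have hrw : (SimpleGraph.fromEdgeSet (↑T : Set (Sym2 V))).Reachable i w :=
      hr.trans (aux_adj_iff.2 ⟨he, hxw⟩).reachable
    rw [hKdef, Finset.mem_filter]
    refine ⟨he, ?_⟩
    intro z hz
    rcases Sym2.mem_iff.1 hz with rfl | rfl
    · exact aux_mem_comp.2 hr
    · exact aux_mem_comp.2 hrw
  obtain ⟨e0, he0, hie0⟩ := aux_mem_covered.1 hi
  have he0K : e0 ∈ K := hclose e0 he0 i hie0 (Reachable.refl _)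
  have hiK : i ∈ covered K := aux_mem_covered.2 ⟨e0, he0K, hie0⟩
  have hCsub : covered K ⊆ comp T i := by
    intro x hx
    obtain ⟨e, heK, hxe⟩ := aux_mem_covered.1 hx
    exact (Finset.mem_filter.1 heK).2 x hxe
  have hCsup : comp T i ⊆ covered K := by
    intro j hj
    have hr := aux_mem_comp.1 hj
    obtain ⟨q⟩ := hr.symm
    cases q with
    | nil => exact hiK
    | @cons _ w _ hadj q' =>
      rw [aux_adj_iff] at hadj
      have : s(j, w) ∈ K := hclose _ hadj.1 j (by simp) (aux_mem_comp.1 hj)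
      exact aux_mem_covered.2 ⟨s(j, w), this, by simp⟩
  have hCeq : covered K = comp T i := Finset.Subset.antisymm hCsub hCsup
  refine ⟨?_, hCeq⟩
  rw [ccs, Finset.mem_filter, Finset.mem_powerset]
  refine ⟨hKT, ⟨e0, he0K⟩, ?_, ?_⟩
  · -- EdgeConnected K
    intro i' hi' j' hj'
    have hri' : (SimpleGraph.fromEdgeSet (↑T : Set (Sym2 V))).Reachable i i' :=
      aux_mem_comp.1 (hCsub hi')
    have hrj' : (SimpleGraph.fromEdgeSet (↑T : Set (Sym2 V))).Reachable i j' :=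
      aux_mem_comp.1 (hCsub hj')
    obtain ⟨p⟩ := hri'.symm.trans hrj'
    refine aux_reachable_transfer p ?_
    intro fe hfe
    have hfT := (aux_walk_edge_mem p hfe).1
    have hout : fe.out.1 ∈ p.support :=
      aux_mem_support_of_mem_edges p hfe (Sym2.out_fst_mem fe)
    have hri'x := aux_reachable_of_mem_support p hout
    exact hclose fe hfT fe.out.1 (Sym2.out_fst_mem fe) (hri'.trans hri'x)
  · intro g hg hgK x hxg hxK
    exact hgK (hclose g hg x hxg (aux_mem_comp.1 (hCsub hxK)))

lemma aux_ccs_comp {T K : Finset (Sym2 V)} (hK : K ∈ ccs T) :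
    covered K ∈ comps T ∧ (T.filter fun e => ∀ x ∈ e, x ∈ covered K) = K := by
  rw [ccs, Finset.mem_filter, Finset.mem_powerset] at hK
  obtain ⟨hKT, hKne, hKconn, hKcl⟩ := hK
  obtain ⟨e0, he0⟩ := hKne
  have hi0K : e0.out.1 ∈ covered K := aux_mem_covered.2 ⟨e0, he0, Sym2.out_fst_mem e0⟩
  have hcomp_eq : comp T e0.out.1 = covered K := by
    apply Finset.Subset.antisymm
    · intro j hj
      obtain ⟨p⟩ := aux_mem_comp.1 hj
      exact aux_walk_stays hKcl p hi0K
    · intro x hx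
      exact aux_mem_comp.2 ((hKconn _ hi0K x hx).mono (aux_graph_mono hKT))
  constructor
  · rw [comps]
    apply Finset.mem_image.2
    exact ⟨e0.out.1, aux_mem_covered.2 ⟨e0, hKT he0, Sym2.out_fst_mem e0⟩, hcomp_eq⟩
  · ext e
    rw [Finset.mem_filter]
    constructor
    · rintro ⟨heT, hall⟩
      by_contra heK
      exact hKcl e heT heK e.out.1 (Sym2.out_fst_mem e) (hall _ (Sym2.out_fst_mem e))
    · intro heK
      exact ⟨hKT heK, fun x hx => aux_mem_covered.2 ⟨e, heK, hx⟩⟩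

lemma aux_sum_comps {T : Finset (Sym2 V)} (hd : ∀ e ∈ T, ¬ e.IsDiag) (v : Finset V → ℝ) :
    ∑ C ∈ comps T, v C = ∑ K ∈ ccs T, v (covered K) := by
  refine Finset.sum_nbij' (fun C => T.filter fun e => ∀ x ∈ e, x ∈ C)
    (fun K => covered K) ?_ ?_ ?_ ?_ ?_
  · intro C hC
    obtain ⟨i, hi, rfl⟩ := Finset.mem_image.1 hC
    exact (aux_comp_edges_mem hd hi).1
  · intro K hK
    exact (aux_ccs_comp hK).1
  · intro C hC
    obtain ⟨i, hi, rfl⟩ := Finset.mem_image.1 hC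
    exact (aux_comp_edges_mem hd hi).2
  · intro K hK
    exact (aux_ccs_comp hK).2
  · intro C hC
    obtain ⟨i, hi, rfl⟩ := Finset.mem_image.1 hC
    rw [(aux_comp_edges_mem hd hi).2]

lemma aux_neg_one_pow_sub {a s : ℕ} (h : s ≤ a) : (-1:ℝ)^(a-s) = (-1)^a * (-1)^s := by
  have key : a - s + s = a := by omega
  calc (-1:ℝ)^(a-s) = (-1)^(a-s) * ((-1)^s * (-1)^s) := by
        rw [← mul_pow]; norm_num
    _ = ((-1)^(a-s) * (-1)^s) * (-1)^s := by ring
    _ = (-1)^a * (-1)^s := by rw [← pow_add, key]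

lemma aux_sum_powerset_neg (F : Finset (Sym2 V)) :
    (∑ S ∈ F.powerset, (-1:ℝ)^S.card) = if F = ∅ then 1 else 0 := by
  have h := Finset.sum_powerset_neg_one_pow_card (x := F)
  have h2 : ((∑ S ∈ F.powerset, (-1:ℤ)^S.card : ℤ) : ℝ)
      = ∑ S ∈ F.powerset, (-1:ℝ)^S.card := by push_cast; rfl
  rw [← h2, h]
  split <;> norm_num

lemma aux_dividend_eq {L : Finset (Sym2 V)} (hd : ∀ e ∈ L, ¬ e.IsDiag) (v : Finset V → ℝ) :
    dividend (linkGame v) L =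
      ∑ K ∈ L.powerset.filter (fun K => K.Nonempty ∧ EdgeConnected K ∧
          ∀ g ∈ L, g ∉ K → ∃ x ∈ g, x ∈ covered K),
        (-1 : ℝ) ^ (L.card - K.card) * v (covered K) := by
  unfold dividend linkGame
  rw [Finset.sum_congr rfl (fun T hT => by
    rw [aux_sum_comps (fun e he => hd e (Finset.mem_powerset.1 hT he)) v])]
  have h2 : ∀ T ∈ L.powerset,
      (-1:ℝ)^(L.card - T.card) * ∑ K ∈ ccs T, v (covered K)
      = ∑ K ∈ L.powerset,
          if K ∈ ccs T then (-1:ℝ)^(L.card - T.card) * v (covered K) else 0 := by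
    intro T hT
    rw [Finset.mul_sum, Finset.sum_ite_mem]
    have hsub : ccs T ⊆ L.powerset := by
      intro K hK
      rw [ccs, Finset.mem_filter, Finset.mem_powerset] at hK
      exact Finset.mem_powerset.2 (hK.1.trans (Finset.mem_powerset.1 hT))
    rw [Finset.inter_eq_right.2 hsub]
  rw [Finset.sum_congr rfl h2, Finset.sum_comm]
  -- now fix K and compute the inner sum over T
  rw [Finset.sum_filter]
  apply Finset.sum_congr rfl
  intro K hK
  have hKL : K ⊆ L := Finset.mem_powerset.1 hK
  by_cases hgood : K.Nonempty ∧ EdgeConnected K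
  · obtain ⟨hKne, hKconn⟩ := hgood
    set B : Finset (Sym2 V) :=
      L.filter (fun g => g ∉ K ∧ ∃ x ∈ g, x ∈ covered K) with hBdef
    set F : Finset (Sym2 V) := (L \ K) \ B with hFdef
    have hmemccs : ∀ T ∈ L.powerset, (K ∈ ccs T ↔ K ⊆ T ∧ ∀ g ∈ T, g ∉ B) := by
      intro T hT
      have hTL : T ⊆ L := Finset.mem_powerset.1 hT
      rw [ccs, Finset.mem_filter, Finset.mem_powerset]
      constructor
      · rintro ⟨hKT, -, -, hcl⟩
        refine ⟨hKT, ?_⟩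
        intro g hgT hgB
        rw [hBdef, Finset.mem_filter] at hgB
        obtain ⟨-, hgK, x, hxg, hxcov⟩ := hgB
        exact hcl g hgT hgK x hxg hxcov
      · rintro ⟨hKT, hTB⟩
        refine ⟨hKT, hKne, hKconn, ?_⟩
        intro g hgT hgK x hxg hxcov
        exact hTB g hgT (by
          rw [hBdef, Finset.mem_filter]
          exact ⟨hTL hgT, hgK, x, hxg, hxcov⟩)
    have hFsub : F ⊆ L \ K := Finset.sdiff_subset
    have hFcard : F.card ≤ L.card - K.card := by
      have h1 : F.card ≤ (L \ K).card := Finset.card_le_card hFsub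
      have h2 : (L \ K).card = L.card - K.card := Finset.card_sdiff_of_subset hKL
      omega
    -- reindex over subsets of F
    have hsum : (∑ T ∈ L.powerset,
        if K ∈ ccs T then (-1:ℝ)^(L.card - T.card) * v (covered K) else 0)
        = ∑ S ∈ F.powerset, (-1:ℝ)^(L.card - (K ∪ S).card) * v (covered K) := by
      rw [← Finset.sum_filter]
      refine Finset.sum_nbij' (fun T => T \ K) (fun S => K ∪ S) ?_ ?_ ?_ ?_ ?_
      · intro T hT
        rw [Finset.mem_filter] at hT
        obtain ⟨hTpow, hTccs⟩ := hT
        obtain ⟨hKT, hTB⟩ := (hmemccs T hTpow).1 hTccs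
        rw [Finset.mem_powerset]
        intro g hg
        rw [Finset.mem_sdiff] at hg
        rw [hFdef, Finset.mem_sdiff, Finset.mem_sdiff]
        exact ⟨⟨Finset.mem_powerset.1 hTpow hg.1, hg.2⟩, hTB g hg.1⟩
      · intro S hS
        rw [Finset.mem_powerset] at hS
        have hSLK : S ⊆ L \ K := hS.trans hFsub
        have hTpow : K ∪ S ∈ L.powerset := by
          rw [Finset.mem_powerset]
          intro g hg
          rcases Finset.mem_union.1 hg with hgK | hgS
          · exact hKL hgK
          · exact (Finset.mem_sdiff.1 (hSLK hgS)).1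
        rw [Finset.mem_filter]
        refine ⟨hTpow, (hmemccs _ hTpow).2 ⟨Finset.subset_union_left, ?_⟩⟩
        intro g hg hgB
        rcases Finset.mem_union.1 hg with hgK | hgS
        · rw [hBdef, Finset.mem_filter] at hgB
          exact hgB.2.1 hgK
        · have := hS hgS
          rw [hFdef, Finset.mem_sdiff] at this
          exact this.2 hgB
      · intro T hT
        rw [Finset.mem_filter] at hT
        obtain ⟨hKT, -⟩ := (hmemccs T hT.1).1 hT.2
        exact Finset.union_sdiff_of_subset hKT
      · intro S hS
        rw [Finset.mem_powerset] at hS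
        have hdisj : Disjoint K S := by
          rw [Finset.disjoint_left]
          intro g hgK hgS
          exact (Finset.mem_sdiff.1 (hFsub (hS hgS))).2 hgK
        exact Finset.union_sdiff_cancel_left hdisj
      · intro T hT
        rw [Finset.mem_filter] at hT
        obtain ⟨hKT, -⟩ := (hmemccs T hT.1).1 hT.2
        rw [Finset.union_sdiff_of_subset hKT]
    rw [hsum]
    -- evaluate the alternating sum
    have hterm : ∀ S ∈ F.powerset,
        (-1:ℝ)^(L.card - (K ∪ S).card) * v (covered K)
          = ((-1:ℝ)^(L.card - K.card) * v (covered K)) * (-1:ℝ)^S.card := by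
      intro S hS
      rw [Finset.mem_powerset] at hS
      have hdisj : Disjoint K S := by
        rw [Finset.disjoint_left]
        intro g hgK hgS
        exact (Finset.mem_sdiff.1 (hFsub (hS hgS))).2 hgK
      have hScard : S.card ≤ L.card - K.card := (Finset.card_le_card hS).trans hFcard
      have hKcard : K.card ≤ L.card := Finset.card_le_card hKL
      have hcu : (K ∪ S).card = K.card + S.card := Finset.card_union_of_disjoint hdisj
      have hexp : L.card - (K ∪ S).card = (L.card - K.card) - S.card := by omega
      rw [hexp, aux_neg_one_pow_sub hScard]
      ring
    rw [Finset.sum_congr rfl hterm, ← Finset.mul_sum, aux_sum_powerset_neg]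
    by_cases hadj : ∀ g ∈ L, g ∉ K → ∃ x ∈ g, x ∈ covered K
    · have hF : F = ∅ := by
        rw [Finset.eq_empty_iff_forall_notMem]
        intro g hg
        rw [hFdef, Finset.mem_sdiff, Finset.mem_sdiff] at hg
        obtain ⟨⟨hgL, hgK⟩, hgB⟩ := hg
        apply hgB
        rw [hBdef, Finset.mem_filter]
        exact ⟨hgL, hgK, hadj g hgL hgK⟩
      rw [if_pos hF, if_pos ⟨hKne, hKconn, hadj⟩, mul_one]
    · have hF : F ≠ ∅ := by
        push_neg at hadj
        obtain ⟨g, hgL, hgK, hgnx⟩ := hadj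
        intro hFe
        have hgF : g ∈ F := by
          rw [hFdef, Finset.mem_sdiff, Finset.mem_sdiff]
          refine ⟨⟨hgL, hgK⟩, ?_⟩
          rw [hBdef, Finset.mem_filter]
          rintro ⟨-, -, x, hxg, hxcov⟩
          exact hgnx x hxg hxcov
        rw [hFe] at hgF
        exact absurd hgF (Finset.notMem_empty g)
      rw [if_neg hF, mul_zero, if_neg]
      rintro ⟨-, -, hadj'⟩
      exact hadj hadj'
  · rw [if_neg (by rintro ⟨h1, h2, -⟩; exact hgood ⟨h1, h2⟩)]
    apply Finset.sum_eq_zero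
    intro T hT
    rw [if_neg]
    intro hccs
    rw [ccs, Finset.mem_filter] at hccs
    exact hgood ⟨hccs.2.1, hccs.2.2.1⟩

end AuxSum
section AuxFormula

open Finset SimpleGraph

/-- `Φ f l p = ∑_{k=0}^p C(p,k) (-1)^k f(l+1-k)`. -/
def auxPhi (f : ℝ → ℝ) (l p : ℕ) : ℝ :=
  ∑ k ∈ Finset.range (p + 1), (p.choose k : ℝ) * ((-1:ℝ)^k * f ((l:ℝ) + 1 - (k:ℝ)))

lemma aux_dividend_formula {E L : Finset (Sym2 V)} (hE : SimpleEdges E)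
    (hacE : (SimpleGraph.fromEdgeSet (↑E : Set (Sym2 V))).IsAcyclic) (hL : L ⊆ E)
    (hne : L.Nonempty) (hc : EdgeConnected L)
    (f : ℝ → ℝ) (hf1 : f 1 = 0) :
    dividend (linkGame fun S : Finset V => f (S.card : ℝ)) L
      = auxPhi f L.card (L.filter fun e => ∃ x ∈ e, degA L x = 1).card := by
  have hdL : ∀ e ∈ L, ¬ e.IsDiag := fun e he => hE e (hL he)
  have hacL : (SimpleGraph.fromEdgeSet (↑L : Set (Sym2 V))).IsAcyclic :=
    aux_acyclic_anti (aux_graph_mono hL) hacE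
  set P : Finset (Sym2 V) := L.filter fun e => ∃ x ∈ e, degA L x = 1 with hPdef
  have hPL : P ⊆ L := Finset.filter_subset _ _
  rw [aux_dividend_eq hdL]
  -- bijection with subsets of P different from L
  have hbij : (∑ K ∈ L.powerset.filter (fun K => K.Nonempty ∧ EdgeConnected K ∧
          ∀ g ∈ L, g ∉ K → ∃ x ∈ g, x ∈ covered K),
        (-1 : ℝ) ^ (L.card - K.card) * (fun S : Finset V => f (S.card : ℝ)) (covered K))
      = ∑ D ∈ P.powerset.filter (fun D => D ≠ L),
          (-1:ℝ)^D.card * f ((L.card : ℝ) + 1 - (D.card : ℝ)) := by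
    refine Finset.sum_nbij' (fun K => L \ K) (fun D => L \ D) ?_ ?_ ?_ ?_ ?_
    · intro K hK
      rw [Finset.mem_filter, Finset.mem_powerset] at hK
      obtain ⟨hKL, hKne, hKconn, hKadj⟩ := hK
      rw [Finset.mem_filter, Finset.mem_powerset]
      constructor
      · intro g hg
        rw [Finset.mem_sdiff] at hg
        rw [hPdef, Finset.mem_filter]
        exact ⟨hg.1, aux_dir2 hdL hacL hKL hKconn hKadj hg.1 hg.2⟩
      · intro hEq
        have hEq' : L \ K = L := hEq
        obtain ⟨e0, he0⟩ := hKne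
        have : e0 ∈ L \ K := hEq'.symm ▸ hKL he0
        exact (Finset.mem_sdiff.1 this).2 he0
    · intro D hD
      rw [Finset.mem_filter, Finset.mem_powerset] at hD
      obtain ⟨hDP, hDne⟩ := hD
      have hDL : D ⊆ L := hDP.trans hPL
      have hDPend : ∀ e ∈ D, ∃ x ∈ e, degA L x = 1 := by
        intro e he
        have := hDP he
        rw [hPdef, Finset.mem_filter] at this
        exact this.2
      have hKne : (L \ D).Nonempty := by
        rw [Finset.sdiff_nonempty]
        intro hLD
        exact hDne (Finset.Subset.antisymm hDL hLD)
      rw [Finset.mem_filter, Finset.mem_powerset]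
      exact ⟨Finset.sdiff_subset, hKne, aux_dir1_conn hc hDPend hDL,
        aux_dir1_adj hdL hc hDPend hDL hKne⟩
    · intro K hK
      rw [Finset.mem_filter, Finset.mem_powerset] at hK
      exact Finset.sdiff_sdiff_eq_self hK.1
    · intro D hD
      rw [Finset.mem_filter, Finset.mem_powerset] at hD
      exact Finset.sdiff_sdiff_eq_self (hD.1.trans hPL)
    · intro K hK
      rw [Finset.mem_filter, Finset.mem_powerset] at hK
      obtain ⟨hKL, hKne, hKconn, hKadj⟩ := hK
      have hdK : ∀ e ∈ K, ¬ e.IsDiag := fun e he => hdL e (hKL he)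
      have hacK := aux_acyclic_anti (aux_graph_mono hKL) hacL
      have hcov : (covered K).card = K.card + 1 := aux_card_covered hdK hacK hKne hKconn
      have hKcard : K.card ≤ L.card := Finset.card_le_card hKL
      have hDcard : (L \ K).card = L.card - K.card := Finset.card_sdiff_of_subset hKL
      show (-1:ℝ)^(L.card - K.card) * f (((covered K).card : ℝ))
        = (-1:ℝ)^((L \ K).card) * f ((L.card : ℝ) + 1 - (((L \ K).card : ℕ) : ℝ))
      rw [hDcard, hcov]
      have harg : ((K.card + 1 : ℕ) : ℝ) = (L.card : ℝ) + 1 - ((L.card - K.card : ℕ) : ℝ) := by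
        have h1 : ((L.card - K.card : ℕ) : ℝ) = (L.card : ℝ) - (K.card : ℝ) :=
          by push_cast [hKcard]; ring
        rw [h1]
        push_cast
        ring
      rw [harg]
  rw [hbij]
  -- extend the sum to all of P.powerset (the only possibly-missing term vanishes)
  have hext : (∑ D ∈ P.powerset.filter (fun D => D ≠ L),
          (-1:ℝ)^D.card * f ((L.card : ℝ) + 1 - (D.card : ℝ)))
      = ∑ D ∈ P.powerset, (-1:ℝ)^D.card * f ((L.card : ℝ) + 1 - (D.card : ℝ)) := by
    rw [← Finset.sum_filter_add_sum_filter_not P.powerset (fun D => D ≠ L)]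
    have hzero : (∑ D ∈ P.powerset.filter (fun D => ¬ D ≠ L),
        (-1:ℝ)^D.card * f ((L.card : ℝ) + 1 - (D.card : ℝ))) = 0 := by
      apply Finset.sum_eq_zero
      intro D hD
      rw [Finset.mem_filter, not_not] at hD
      rw [hD.2]
      have : (L.card : ℝ) + 1 - (L.card : ℝ) = 1 := by ring
      rw [this, hf1, mul_zero]
    rw [hzero, add_zero]
  rw [hext]
  -- group by cardinality
  have hgroup := Finset.sum_powerset_apply_card
    (fun k => (-1:ℝ)^k * f ((L.card : ℝ) + 1 - (k:ℝ))) (x := P)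
  rw [hgroup]
  rw [auxPhi]
  apply Finset.sum_congr rfl
  intro k hk
  rw [nsmul_eq_mul]

end AuxFormula
section AuxAnalysis

open Finset fwdDiff

lemma aux_fwdDiff_sum (p : ℕ) (u : ℝ → ℝ) (y : ℝ) :
    (fwdDiff (1:ℝ))^[p] u y = ∑ k ∈ Finset.range (p+1),
      (((-1:ℝ)^(p-k) * (p.choose k : ℝ)) * u (y + k)) := by
  rw [fwdDiff_iter_eq_sum_shift]
  apply Finset.sum_congr rfl
  intro k hk
  simp only [nsmul_eq_mul, mul_one, zsmul_eq_mul]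
  push_cast
  ring

lemma aux_fwdDiff_nonneg :
    ∀ (p n : ℕ) (f : ℝ → ℝ), p ≤ n → ContDiff ℝ (n : ℕ∞) f →
      (∀ k ≤ n, ∀ x : ℝ, 1 ≤ x → 0 ≤ iteratedDeriv k f x) →
      ∀ x : ℝ, 1 ≤ x → 0 ≤ (fwdDiff (1:ℝ))^[p] f x := by
  intro p
  induction p with
  | zero =>
    intro n f _ _ hpos x hx
    simpa using hpos 0 (Nat.zero_le n) x hx
  | succ p ih =>
    intro n f hpn hf hpos x hx
    obtain ⟨m, rfl⟩ : ∃ m, n = m + 1 := ⟨n - 1, by omega⟩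
    have h1n : (1 : WithTop ℕ∞) ≤ ((m + 1 : ℕ) : ℕ∞) := by
      exact_mod_cast Nat.le_add_left 1 m
    have hdiff : Differentiable ℝ f := hf.differentiable (by simp)
    have hf2 : ContDiff ℝ ((m : ℕ∞) + 1) f := by exact_mod_cast hf
    have hf' : ContDiff ℝ (m : ℕ∞) (deriv f) := (contDiff_succ_iff_deriv.1 hf2).2.2
    have hpos' : ∀ k ≤ m, ∀ y : ℝ, 1 ≤ y → 0 ≤ iteratedDeriv k (deriv f) y := by
      intro k hk y hy
      rw [← iteratedDeriv_succ']
      exact hpos (k+1) (by omega) y hy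
    have hpm : p ≤ m := by omega
    -- derivative of the iterated difference
    have hdg : ∀ y : ℝ, HasDerivAt ((fwdDiff (1:ℝ))^[p] f) ((fwdDiff (1:ℝ))^[p] (deriv f) y) y := by
      intro y
      have hfun : (fwdDiff (1:ℝ))^[p] f = fun z => ∑ k ∈ Finset.range (p+1),
          (((-1:ℝ)^(p-k) * (p.choose k : ℝ)) * f (z + k)) := funext (aux_fwdDiff_sum p f)
      rw [hfun, aux_fwdDiff_sum p (deriv f) y]
      apply HasDerivAt.fun_sum
      intro k hk
      have h0 : HasDerivAt f (deriv f (y + k)) (y + k) := (hdiff (y + k)).hasDerivAt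
      have hinner : HasDerivAt (fun z : ℝ => z + (k:ℝ)) 1 y := (hasDerivAt_id y).add_const _
      have hcomp : HasDerivAt (fun z : ℝ => f (z + k)) (deriv f (y + k)) y := by
        have := h0.comp y hinner
        simpa [Function.comp_def] using this
      exact hcomp.const_mul _
    have hdiffg : Differentiable ℝ ((fwdDiff (1:ℝ))^[p] f) := fun y => (hdg y).differentiableAt
    have hmono : MonotoneOn ((fwdDiff (1:ℝ))^[p] f) (Set.Ici 1) := by
      apply monotoneOn_of_deriv_nonneg (convex_Ici 1) hdiffg.continuous.continuousOn
        hdiffg.differentiableOn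
      intro y hy
      rw [interior_Ici, Set.mem_Ioi] at hy
      rw [(hdg y).deriv]
      exact ih m (deriv f) hpm hf' hpos' y (le_of_lt hy)
    rw [Function.iterate_succ_apply']
    have : fwdDiff 1 ((fwdDiff (1:ℝ))^[p] f) x = (fwdDiff (1:ℝ))^[p] f (x + 1) - (fwdDiff (1:ℝ))^[p] f x := rfl
    rw [this, sub_nonneg]
    exact hmono (Set.mem_Ici.2 hx) (Set.mem_Ici.2 (by linarith)) (by linarith)

lemma aux_phi_step (f : ℝ → ℝ) (l q : ℕ) :
    auxPhi f l (q+1) = auxPhi f l q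
      - ∑ k ∈ Finset.range (q+1), (q.choose k : ℝ) * ((-1:ℝ)^k * f ((l:ℝ) - (k:ℝ))) := by
  have hpeel : auxPhi f l (q+1)
      = (∑ k ∈ Finset.range (q+1),
          (((q+1).choose (k+1) : ℝ) * ((-1:ℝ)^(k+1) * f ((l:ℝ) + 1 - ((k+1 : ℕ):ℝ)))))
        + (((q+1).choose 0 : ℝ) * ((-1:ℝ)^0 * f ((l:ℝ) + 1 - ((0:ℕ):ℝ)))) := by
    rw [auxPhi]
    exact Finset.sum_range_succ'
      (fun k => ((q+1).choose k : ℝ) * ((-1:ℝ)^k * f ((l:ℝ) + 1 - (k:ℝ)))) (q+1)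
  have hsplit : ∀ k ∈ Finset.range (q+1),
      (((q+1).choose (k+1) : ℝ) * ((-1:ℝ)^(k+1) * f ((l:ℝ) + 1 - ((k+1 : ℕ):ℝ))))
      = (-((q.choose k : ℝ) * ((-1:ℝ)^k * f ((l:ℝ) - (k:ℝ)))))
        + ((q.choose (k+1) : ℝ) * ((-1:ℝ)^(k+1) * f ((l:ℝ) + 1 - ((k+1 : ℕ):ℝ)))) := by
    intro k hk
    rw [Nat.choose_succ_succ]
    have harg : (l:ℝ) + 1 - ((k+1 : ℕ):ℝ) = (l:ℝ) - (k:ℝ) := by push_cast; ring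
    rw [harg]
    push_cast
    ring
  have hshift : (∑ k ∈ Finset.range (q+1),
        ((q.choose (k+1) : ℝ) * ((-1:ℝ)^(k+1) * f ((l:ℝ) + 1 - ((k+1 : ℕ):ℝ)))))
      = auxPhi f l q - f ((l:ℝ) + 1) := by
    have h1 := Finset.sum_range_succ'
      (fun j => (q.choose j : ℝ) * ((-1:ℝ)^j * f ((l:ℝ) + 1 - (j:ℝ)))) (q+1)
    have h2 : (∑ j ∈ Finset.range (q+1+1),
        (q.choose j : ℝ) * ((-1:ℝ)^j * f ((l:ℝ) + 1 - (j:ℝ)))) = auxPhi f l q := by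
      rw [Finset.sum_range_succ, auxPhi]
      simp [Nat.choose_succ_self]
    have h3 : ((q.choose 0 : ℝ) * ((-1:ℝ)^0 * f ((l:ℝ) + 1 - ((0:ℕ):ℝ))))
        = f ((l:ℝ) + 1) := by norm_num
    rw [h2, h3] at h1
    linarith [h1]
  rw [hpeel, Finset.sum_congr rfl hsplit, Finset.sum_add_distrib, hshift]
  have h5 : (∑ k ∈ Finset.range (q+1), (-((q.choose k : ℝ) * ((-1:ℝ)^k * f ((l:ℝ) - (k:ℝ))))))
      = - ∑ k ∈ Finset.range (q+1), ((q.choose k : ℝ) * ((-1:ℝ)^k * f ((l:ℝ) - (k:ℝ)))) := by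
    rw [Finset.sum_neg_distrib]
  rw [h5]
  have h6 : (((q+1).choose 0 : ℕ) : ℝ) * ((-1:ℝ)^0 * f ((l:ℝ) + 1 - ((0:ℕ):ℝ)))
      = f ((l:ℝ) + 1) := by norm_num
  rw [h6]
  ring

lemma aux_B_eq (f : ℝ → ℝ) (l q : ℕ) (hq : q ≤ l) :
    (∑ k ∈ Finset.range (q+1), (q.choose k : ℝ) * ((-1:ℝ)^k * f ((l:ℝ) - (k:ℝ))))
      = (fwdDiff (1:ℝ))^[q] f ((l:ℝ) - (q:ℝ)) := by
  rw [aux_fwdDiff_sum, ← Finset.sum_range_reflect]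
  apply Finset.sum_congr rfl
  intro k hk
  rw [Finset.mem_range, Nat.lt_succ_iff] at hk
  have h1 : q + 1 - 1 - k = q - k := by omega
  rw [h1, Nat.choose_symm hk]
  have h2 : ((q - k : ℕ) : ℝ) = (q : ℝ) - (k : ℝ) := by
    have := Nat.cast_sub (R := ℝ) hk
    exact this
  have h3 : (l:ℝ) - (q:ℝ) + (k:ℝ) = (l:ℝ) - ((q - k : ℕ) : ℝ) := by rw [h2]; ring
  rw [← h3]
  ring

lemma aux_phi_anti (n : ℕ) (f : ℝ → ℝ) (hf : ContDiff ℝ (n : ℕ∞) f)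
    (hpos : ∀ k ≤ n, ∀ x : ℝ, 1 ≤ x → 0 ≤ iteratedDeriv k f x)
    (l : ℕ) (hl : l ≤ n) (a b : ℕ) (hab : a ≤ b) (hbl : b ≤ l) :
    auxPhi f l b ≤ auxPhi f l a := by
  induction b, hab using Nat.le_induction with
  | base => exact le_refl _
  | succ b hab ih =>
    have hbl' : b ≤ l := by omega
    have hB : 0 ≤ (fwdDiff (1:ℝ))^[b] f ((l:ℝ) - (b:ℝ)) := by
      apply aux_fwdDiff_nonneg b n f (by omega) hf hpos
      have hcast : (b:ℝ) + 1 ≤ (l:ℝ) := by exact_mod_cast (by omega : b + 1 ≤ l)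
      linarith
    have hstep := aux_phi_step f l b
    rw [aux_B_eq f l b hbl'] at hstep
    have := ih hbl'
    linarith

end AuxAnalysis
/-- in a cycle-free graph, among nonempty connected edge sets of equal
cardinality, Harsanyi dividends of the link game decrease with the number of
cutedges (for `f ∈ C^n(ℝ)` with non-negative derivatives up to order `n` on
`[1, ∞)`, `n` the number of nodes, and `f(1) = 0`). -/
theorem dividend_monotone_in_cutedges (n : ℕ) (hn : n = Fintype.card V)
    (f : ℝ → ℝ) (hf : ContDiff ℝ (n : ℕ∞) f)
    (hpos : ∀ k ≤ n, ∀ x : ℝ, 1 ≤ x → 0 ≤ iteratedDeriv k f x)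
    (hf1 : f 1 = 0)
    (E : Finset (Sym2 V)) (hE : SimpleEdges E)
    (hacyc : (SimpleGraph.fromEdgeSet (↑E : Set (Sym2 V))).IsAcyclic)
    (L L' : Finset (Sym2 V)) (hL : L ⊆ E) (hL' : L' ⊆ E)
    (hne : L.Nonempty) (hne' : L'.Nonempty)
    (hc : EdgeConnected L) (hc' : EdgeConnected L')
    (hcard : L.card = L'.card) (hd : (cutedges L).card ≤ (cutedges L').card) :
    dividend (linkGame fun S : Finset V => f (S.card : ℝ)) L ≤
      dividend (linkGame fun S : Finset V => f (S.card : ℝ)) L' := by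
  have hdL : ∀ e ∈ L, ¬ e.IsDiag := fun e he => hE e (hL he)
  have hdL' : ∀ e ∈ L', ¬ e.IsDiag := fun e he => hE e (hL' he)
  have hacL := aux_acyclic_anti (aux_graph_mono hL) hacyc
  have hacL' := aux_acyclic_anti (aux_graph_mono hL') hacyc
  have hform := aux_dividend_formula hE hacyc hL hne hc f hf1
  have hform' := aux_dividend_formula hE hacyc hL' hne' hc' f hf1
  have hp := aux_pendant_card hdL hacL hne hc
  have hp' := aux_pendant_card hdL' hacL' hne' hc'
  set p := (L.filter fun e => ∃ x ∈ e, degA L x = 1).card with hpdef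
  set p' := (L'.filter fun e => ∃ x ∈ e, degA L' x = 1).card with hp'def
  -- l + 1 ≤ n
  have hcov : (covered L).card = L.card + 1 := aux_card_covered hdL hacL hne hc
  have hln : L.card + 1 ≤ n := by
    rw [hn, ← hcov, ← Finset.card_univ]
    exact Finset.card_le_univ _
  rw [hform, hform', ← hcard]
  -- p' ≤ p and both ≤ L.card
  have hple : p ≤ L.card := by omega
  have hp'lep : p' ≤ p := by omega
  exact aux_phi_anti n f hf hpos L.card (by omega) p' p hp'lep hple
end
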